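/- arXiv:2404.17256 — 2 statements merged into one kernel-verified Lean document; each statement's English description precedes it below -/
import Mathlib

section
/- Let G be a finite group and V a finite-dimensional representation of G over a field k whose only roots of unity are 1 and −1 (i.e. every ζ ∈ k with ζⁿ = 1 for some n ≥ 1 satisfies ζ = 1 or ζ = −1). Then β^r(G,V) = β(G,V), i.e. the least d such that the G-invariant rational functions of degree ≤ d generate the invariant field k(V)^G over k equals the least d such that the G-invariant polynomials of degree ≤ d generate k(V)^G over k. -/
open MvPolynomial

noncomputable section

variable {k : Type} [Field k] {N : ℕ} {G : Type}

def mAct (M : Matrix (Fin N) (Fin N) k) :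
    MvPolynomial (Fin N) k →ₐ[k] MvPolynomial (Fin N) k :=
  aeval fun i => ∑ j, C (M i j) * X j

lemma mAct_comp (A B : Matrix (Fin N) (Fin N) k) :
    (mAct A).comp (mAct B) = mAct (B * A) := by
  apply MvPolynomial.algHom_ext
  intro i
  simp only [mAct, AlgHom.comp_apply, aeval_X, map_sum, map_mul, aeval_C, algebraMap_eq,
    Finset.mul_sum, Matrix.mul_apply, Finset.sum_mul]
  rw [Finset.sum_comm]
  simp [mul_assoc]

lemma mAct_one : mAct (1 : Matrix (Fin N) (Fin N) k) = AlgHom.id k _ := by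
  apply MvPolynomial.algHom_ext
  intro i
  simp [mAct, Matrix.one_apply, ite_mul, apply_ite C]

def mEquiv (M : GL (Fin N) k) :
    MvPolynomial (Fin N) k ≃ₐ[k] MvPolynomial (Fin N) k :=
  AlgEquiv.ofAlgHom (mAct (M : Matrix (Fin N) (Fin N) k))
    (mAct ((M⁻¹ : GL (Fin N) k) : Matrix (Fin N) (Fin N) k))
    (by rw [mAct_comp, Units.inv_mul, mAct_one])
    (by rw [mAct_comp, Units.mul_inv, mAct_one])

def fAct (M : GL (Fin N) k) :
    FractionRing (MvPolynomial (Fin N) k) ≃+* FractionRing (MvPolynomial (Fin N) k) :=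
  IsFractionRing.ringEquivOfRingEquiv (mEquiv M).toRingEquiv

/-- `f` is an invariant rational function for the linear action `ρ`. -/
def IsInv (ρ : G → GL (Fin N) k) (f : FractionRing (MvPolynomial (Fin N) k)) : Prop :=
  ∀ g, fAct (ρ g) f = f

/-- `f`, written as a quotient `f₁/f₂` of coprime polynomials, has
`deg f = deg f₁ + deg f₂ ≤ d`. -/
def RDegLE (f : FractionRing (MvPolynomial (Fin N) k)) (d : ℕ) : Prop :=
  ∃ f₁ f₂ : MvPolynomial (Fin N) k, f₂ ≠ 0 ∧
    (∀ p : MvPolynomial (Fin N) k, p ∣ f₁ → p ∣ f₂ → IsUnit p) ∧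
    f = algebraMap (MvPolynomial (Fin N) k) (FractionRing (MvPolynomial (Fin N) k)) f₁ /
        algebraMap (MvPolynomial (Fin N) k) (FractionRing (MvPolynomial (Fin N) k)) f₂ ∧
    f₁.totalDegree + f₂.totalDegree ≤ d

/-- `f` is (the image in `k(V)` of) a polynomial of degree at most `d`. -/
def PDegLE (f : FractionRing (MvPolynomial (Fin N) k)) (d : ℕ) : Prop :=
  ∃ p : MvPolynomial (Fin N) k, p.totalDegree ≤ d ∧
    f = algebraMap (MvPolynomial (Fin N) k) (FractionRing (MvPolynomial (Fin N) k)) p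

/-- `β^r(G,V)`: the least `d` such that the invariant rational functions of degree at most `d`
generate the invariant field over `k`. -/
def betaR (ρ : G → GL (Fin N) k) : ℕ :=
  sInf {d : ℕ | ∀ f, IsInv ρ f →
    f ∈ IntermediateField.adjoin k {h | IsInv ρ h ∧ RDegLE h d}}

/-- `β(G,V)`: the least `d` such that the invariant polynomials of degree at most `d`
generate the invariant field over `k`. -/
def betaP (ρ : G → GL (Fin N) k) : ℕ :=
  sInf {d : ℕ | ∀ f, IsInv ρ f →
    f ∈ IntermediateField.adjoin k {h | IsInv ρ h ∧ PDegLE h d}}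

/-- `γ^r(G,V)`: the least `d` such that the invariant rational functions of degree at most `d`
contain a transcendence basis for the invariant field over `k`. -/
def gammaR (ρ : G → GL (Fin N) k) : ℕ :=
  sInf {d : ℕ | ∃ s : Set (FractionRing (MvPolynomial (Fin N) k)),
    (∀ f ∈ s, IsInv ρ f ∧ RDegLE f d) ∧
    AlgebraicIndependent k ((↑) : s → FractionRing (MvPolynomial (Fin N) k)) ∧
    ∀ f, IsInv ρ f → IsAlgebraic (IntermediateField.adjoin k s) f}

/-- `γ(G,V)`: the least `d` such that the invariant polynomials of degree at most `d`
contain a transcendence basis for the invariant field over `k`. -/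
def gammaP (ρ : G → GL (Fin N) k) : ℕ :=
  sInf {d : ℕ | ∃ s : Set (FractionRing (MvPolynomial (Fin N) k)),
    (∀ f ∈ s, IsInv ρ f ∧ PDegLE f d) ∧
    AlgebraicIndependent k ((↑) : s → FractionRing (MvPolynomial (Fin N) k)) ∧
    ∀ f, IsInv ρ f → IsAlgebraic (IntermediateField.adjoin k s) f}

section Aux

local notation "Pk" => MvPolynomial (Fin N) k
local notation "Fk" => FractionRing (MvPolynomial (Fin N) k)
local notation "aM" => algebraMap (MvPolynomial (Fin N) k) (FractionRing (MvPolynomial (Fin N) k))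

lemma mAct_mAct (A B : Matrix (Fin N) (Fin N) k) (p : Pk) :
    mAct A (mAct B p) = mAct (B * A) p := by
  rw [← mAct_comp]; rfl

lemma mEquiv_apply (M : GL (Fin N) k) (p : Pk) :
    mEquiv M p = mAct (M : Matrix (Fin N) (Fin N) k) p := rfl

lemma fAct_algebraMap (M : GL (Fin N) k) (p : Pk) :
    fAct M (aM p) = aM (mAct (M : Matrix (Fin N) (Fin N) k) p) := by
  have := IsFractionRing.ringEquivOfRingEquiv_algebraMap
    (A := MvPolynomial (Fin N) k) (B := MvPolynomial (Fin N) k)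
    (K := FractionRing (MvPolynomial (Fin N) k)) (L := FractionRing (MvPolynomial (Fin N) k))
    (mEquiv M).toRingEquiv p
  exact this

lemma mAct_ne_zero (M : GL (Fin N) k) {p : Pk} (hp : p ≠ 0) :
    mAct (M : Matrix (Fin N) (Fin N) k) p ≠ 0 := by
  intro h
  apply hp
  have := (mEquiv M).injective (a₁ := p) (a₂ := 0)
  simp only [mEquiv_apply, map_zero] at this
  exact this h

lemma mAct_isHomogeneous (M : Matrix (Fin N) (Fin N) k) {p : Pk} {n : ℕ}
    (hp : p.IsHomogeneous n) : (mAct M p).IsHomogeneous n := by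
  have : (aeval (fun i => ∑ j, C (M i j) * X j) p).IsHomogeneous (1 * n) :=
    hp.aeval _ (fun i => IsHomogeneous.sum _ _ _
      (fun j _ => isHomogeneous_C_mul_X (M i j) j))
  simpa [mAct] using this

lemma mAct_homogeneousComponent (M : Matrix (Fin N) (Fin N) k) (n : ℕ) (p : Pk) :
    homogeneousComponent n (mAct M p) = mAct M (homogeneousComponent n p) := by
  classical
  conv_lhs => rw [← p.sum_homogeneousComponent]
  rw [map_sum, map_sum]
  rw [Finset.sum_congr rfl (fun i _ => homogeneousComponent_of_mem
    ((mem_homogeneousSubmodule _ _).mpr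
      (mAct_isHomogeneous M (homogeneousComponent_isHomogeneous i p))))]
  rw [Finset.sum_ite_eq]
  split_ifs with h
  · rfl
  · rw [homogeneousComponent_eq_zero _ _ (by simpa using h), map_zero]

lemma isUnit_eq_C : ∀ {n : ℕ} {p : MvPolynomial (Fin n) k}, IsUnit p →
    ∃ c : k, c ≠ 0 ∧ p = C c := by
  intro n
  induction n with
  | zero =>
    intro p hp
    refine ⟨constantCoeff p, ?_, ?_⟩
    · have := hp.map (constantCoeff (σ := Fin 0) (R := k))
      exact this.ne_zero
    · rw [p.eq_C_of_isEmpty, constantCoeff_C]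
  | succ m ih =>
    intro p hp
    have h2 : IsUnit (MvPolynomial.finSuccEquiv k m p) :=
      hp.map (MvPolynomial.finSuccEquiv k m)
    obtain ⟨r, hr, hrp⟩ := Polynomial.isUnit_iff.mp h2
    obtain ⟨c, hc, rfl⟩ := ih hr
    refine ⟨c, hc, ?_⟩
    have h3 : (MvPolynomial.finSuccEquiv k m).symm (Polynomial.C (C c)) = C c := by
      simpa using congrFun (congrArg (fun f => f.toFun)
        (MvPolynomial.finSuccEquiv_comp_C_eq_C m)) c
    have h4 := congrArg (MvPolynomial.finSuccEquiv k m).symm hrp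
    rw [AlgEquiv.symm_apply_apply, h3] at h4
    exact h4.symm

lemma frac_unique {f₁ f₂ g₁ g₂ : Pk}
    (hf₂ : f₂ ≠ 0)
    (hf : ∀ p : Pk, p ∣ f₁ → p ∣ f₂ → IsUnit p)
    (hg : ∀ p : Pk, p ∣ g₁ → p ∣ g₂ → IsUnit p)
    (heq : f₁ * g₂ = g₁ * f₂) :
    ∃ c : k, c ≠ 0 ∧ g₁ = C c * f₁ ∧ g₂ = C c * f₂ := by
  have hfR : IsRelPrime f₂ f₁ := fun p h1 h2 => hf p h2 h1
  have hgR : IsRelPrime g₂ g₁ := fun p h1 h2 => hg p h2 h1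
  have h1 : f₂ ∣ g₂ :=
    hfR.dvd_of_dvd_mul_right (y := g₂) ⟨g₁, by rw [mul_comm g₂ f₁, heq, mul_comm]⟩
  have h2 : g₂ ∣ f₂ :=
    hgR.dvd_of_dvd_mul_right (y := f₂) ⟨f₁, by rw [mul_comm f₂ g₁, ← heq, mul_comm]⟩
  obtain ⟨u, hu⟩ := associated_of_dvd_dvd h1 h2
  obtain ⟨c, hc, hcu⟩ := isUnit_eq_C u.isUnit
  refine ⟨c, hc, ?_, ?_⟩
  · have h4 : g₁ * f₂ = (C c * f₁) * f₂ := by rw [← heq, ← hu, hcu]; ring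
    exact mul_right_cancel₀ hf₂ h4
  · rw [← hu, hcu]; ring


lemma exists_hc_ne_zero {p : Pk} (hp : p ≠ 0) :
    ∃ n, homogeneousComponent n p ≠ 0 ∧ n ≤ p.totalDegree := by
  by_contra hcon
  push_neg at hcon
  apply hp
  rw [← p.sum_homogeneousComponent]
  refine Finset.sum_eq_zero (fun i hi => ?_)
  rcases eq_or_ne (homogeneousComponent i p) 0 with h0 | h0
  · exact h0
  · exact absurd (Nat.lt_succ_iff.mp (Finset.mem_range.mp hi)) (Nat.not_le.mpr (hcon i h0))

lemma mAct_inv_mAct [Group G] (ρ : G →* GL (Fin N) k) (g : G) (p : Pk) :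
    mAct ((ρ g⁻¹ : GL (Fin N) k) : Matrix (Fin N) (Fin N) k)
      (mAct ((ρ g : GL (Fin N) k) : Matrix (Fin N) (Fin N) k) p) = p := by
  rw [mAct_mAct, ← Units.val_mul, ← map_mul, mul_inv_cancel, map_one, Units.val_one, mAct_one]
  rfl

lemma mAct_C (M : Matrix (Fin N) (Fin N) k) (a : k) (p : Pk) :
    mAct M (C a * p) = C a * mAct M p := by
  rw [map_mul]
  congr 1
  simp [mAct, algebraMap_eq]

lemma exists_semiinv_const [Group G] [Finite G]
    (hroots : ∀ ζ : k, (∃ n : ℕ, 0 < n ∧ ζ ^ n = 1) → ζ = 1 ∨ ζ = -1)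
    (ρ : G →* GL (Fin N) k) {f₁ f₂ : Pk} (hf₂ : f₂ ≠ 0)
    (hcop : ∀ p : Pk, p ∣ f₁ → p ∣ f₂ → IsUnit p)
    (hinv : IsInv (fun g => ρ g) (aM f₁ / aM f₂)) (g : G) :
    ∃ c : k, c ≠ 0 ∧ c * c = 1 ∧
      mAct ((ρ g : GL (Fin N) k) : Matrix (Fin N) (Fin N) k) f₁ = C c * f₁ ∧
      mAct ((ρ g : GL (Fin N) k) : Matrix (Fin N) (Fin N) k) f₂ = C c * f₂ := by
  have hinj := IsFractionRing.injective (MvPolynomial (Fin N) k)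
    (FractionRing (MvPolynomial (Fin N) k))
  have hmapne : ∀ q : Pk, q ≠ 0 → aM q ≠ 0 := fun q hq hq0 =>
    hq (IsFractionRing.to_map_eq_zero_iff.mp hq0)
  have hg := hinv g
  rw [map_div₀, fAct_algebraMap, fAct_algebraMap] at hg
  have hψf₂ : mAct ((ρ g : GL (Fin N) k) : Matrix (Fin N) (Fin N) k) f₂ ≠ 0 :=
    mAct_ne_zero _ hf₂
  rw [div_eq_div_iff (hmapne _ hψf₂) (hmapne _ hf₂)] at hg
  rw [← map_mul, ← map_mul] at hg
  have heq : f₁ * mAct ((ρ g : GL (Fin N) k) : Matrix (Fin N) (Fin N) k) f₂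
      = mAct ((ρ g : GL (Fin N) k) : Matrix (Fin N) (Fin N) k) f₁ * f₂ := (hinj hg).symm
  have hcop' : ∀ p : Pk,
      p ∣ mAct ((ρ g : GL (Fin N) k) : Matrix (Fin N) (Fin N) k) f₁ →
      p ∣ mAct ((ρ g : GL (Fin N) k) : Matrix (Fin N) (Fin N) k) f₂ → IsUnit p := by
    intro p hp1 hp2
    have d1 : mAct ((ρ g⁻¹ : GL (Fin N) k) : Matrix (Fin N) (Fin N) k) p ∣ f₁ := by
      have := map_dvd (mAct ((ρ g⁻¹ : GL (Fin N) k) : Matrix (Fin N) (Fin N) k)) hp1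
      rwa [mAct_inv_mAct] at this
    have d2 : mAct ((ρ g⁻¹ : GL (Fin N) k) : Matrix (Fin N) (Fin N) k) p ∣ f₂ := by
      have := map_dvd (mAct ((ρ g⁻¹ : GL (Fin N) k) : Matrix (Fin N) (Fin N) k)) hp2
      rwa [mAct_inv_mAct] at this
    have hu := hcop _ d1 d2
    have := hu.map (mAct ((ρ g : GL (Fin N) k) : Matrix (Fin N) (Fin N) k))
    rwa [show mAct ((ρ g : GL (Fin N) k) : Matrix (Fin N) (Fin N) k)
        (mAct ((ρ g⁻¹ : GL (Fin N) k) : Matrix (Fin N) (Fin N) k) p) = p from by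
      rw [mAct_mAct, ← Units.val_mul, ← map_mul, inv_mul_cancel, map_one, Units.val_one, mAct_one]
      rfl] at this
  obtain ⟨c, hc0, hc1, hc2⟩ := frac_unique hf₂ hcop hcop' heq
  refine ⟨c, hc0, ?_, hc1, hc2⟩
  -- show c * c = 1 via roots of unity
  have hpow : ∀ n : ℕ, mAct ((ρ (g ^ n) : GL (Fin N) k) : Matrix (Fin N) (Fin N) k) f₂
      = C (c ^ n) * f₂ := by
    intro n
    induction n with
    | zero =>
      rw [pow_zero, map_one, Units.val_one, mAct_one]
      simp
    | succ n ih =>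
      rw [pow_succ, map_mul, Units.val_mul, ← mAct_mAct, ih, mAct_C, hc2, pow_succ]
      rw [C_mul]
      ring
  have hm : c ^ orderOf g = 1 := by
    have h1 := hpow (orderOf g)
    rw [pow_orderOf_eq_one, map_one, Units.val_one, mAct_one] at h1
    have h2 : (C (c ^ orderOf g) - 1) * f₂ = 0 := by
      rw [sub_mul, one_mul, ← h1]; exact sub_eq_zero_of_eq rfl
    rcases mul_eq_zero.mp h2 with h3 | h3
    · have h4 : C (c ^ orderOf g) = (C 1 : Pk) := by
        rw [C_1]; exact sub_eq_zero.mp h3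
      exact C_injective _ _ h4
    · exact absurd h3 hf₂
  rcases hroots c ⟨orderOf g, orderOf_pos g, hm⟩ with rfl | rfl
  · ring
  · ring

lemma rdeg_mem [Group G] [Finite G]
    (hroots : ∀ ζ : k, (∃ n : ℕ, 0 < n ∧ ζ ^ n = 1) → ζ = 1 ∨ ζ = -1)
    (ρ : G →* GL (Fin N) k) {f : Fk} {d : ℕ}
    (hinv : IsInv (fun g => ρ g) f) (hdeg : RDegLE f d) :
    f ∈ IntermediateField.adjoin k
      {h : Fk | IsInv (fun g => ρ g) h ∧ PDegLE h d} := by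
  obtain ⟨f₁, f₂, hf₂, hcop, hfe, hd⟩ := hdeg
  rcases eq_or_ne f₁ 0 with rfl | hf₁
  · rw [hfe, map_zero, zero_div]
    exact zero_mem _
  rw [hfe] at hinv
  -- choose a homogeneous component degree e
  obtain ⟨n₁, hn₁, hn₁d⟩ := exists_hc_ne_zero hf₁
  obtain ⟨n₂, hn₂, hn₂d⟩ := exists_hc_ne_zero hf₂
  obtain ⟨e, hcomp, he₁, he₂⟩ : ∃ e, (homogeneousComponent e f₁ ≠ 0 ∨
      homogeneousComponent e f₂ ≠ 0) ∧ e ≤ f₁.totalDegree ∧ e ≤ f₂.totalDegree := by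
    rcases le_total n₁ n₂ with hle | hle
    · exact ⟨n₁, Or.inl hn₁, hn₁d, hle.trans hn₂d⟩
    · exact ⟨n₂, Or.inr hn₂, hle.trans hn₁d, hn₂d⟩
  classical
  set h : MvPolynomial (Fin N) k :=
    if homogeneousComponent e f₁ ≠ 0 then homogeneousComponent e f₁
    else homogeneousComponent e f₂ with hh_def
  have hh0 : h ≠ 0 := by
    rw [hh_def]
    split_ifs with hif
    · exact hif
    · rcases hcomp with hcc | hcc
      · exact absurd hcc hif
      · exact hcc
  have hhdeg : h.totalDegree ≤ e := by
    rw [hh_def]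
    split_ifs
    · exact (homogeneousComponent_isHomogeneous e f₁).totalDegree_le
    · exact (homogeneousComponent_isHomogeneous e f₂).totalDegree_le
  -- semi-invariance of h with the same constant as f₁, f₂
  have hsemiA : ∀ g : G, mAct ((ρ g : GL (Fin N) k) : Matrix (Fin N) (Fin N) k) (f₁ * h)
      = f₁ * h ∧ mAct ((ρ g : GL (Fin N) k) : Matrix (Fin N) (Fin N) k) (f₂ * h) = f₂ * h := by
    intro g
    obtain ⟨c, hc0, hcc, hc1, hc2⟩ := exists_semiinv_const hroots ρ hf₂ hcop hinv g
    have hch : mAct ((ρ g : GL (Fin N) k) : Matrix (Fin N) (Fin N) k) h = C c * h := by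
      rw [hh_def]
      split_ifs
      · rw [← mAct_homogeneousComponent, hc1, homogeneousComponent_C_mul]
      · rw [← mAct_homogeneousComponent, hc2, homogeneousComponent_C_mul]
    have hCc : (C c : Pk) * C c = 1 := by rw [← C_mul, hcc, C_1]
    constructor
    · rw [map_mul, hc1, hch]
      calc C c * f₁ * (C c * h) = (C c * C c) * (f₁ * h) := by ring
        _ = f₁ * h := by rw [hCc, one_mul]
    · rw [map_mul, hc2, hch]
      calc C c * f₂ * (C c * h) = (C c * C c) * (f₂ * h) := by ring
        _ = f₂ * h := by rw [hCc, one_mul]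
  have hmapne : ∀ q : Pk, q ≠ 0 → aM q ≠ 0 := fun q hq hq0 =>
    hq (IsFractionRing.to_map_eq_zero_iff.mp hq0)
  have hdegA : (f₁ * h).totalDegree ≤ d :=
    le_trans (totalDegree_mul f₁ h)
      (le_trans (add_le_add le_rfl (hhdeg.trans he₂)) hd)
  have hdegB : (f₂ * h).totalDegree ≤ d :=
    le_trans (totalDegree_mul f₂ h)
      (le_trans (add_le_add le_rfl (hhdeg.trans he₁)) (by omega))
  have hmemA : aM (f₁ * h) ∈ {q : Fk | IsInv (fun g => ρ g) q ∧ PDegLE q d} := by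
    refine ⟨fun g => ?_, ⟨f₁ * h, hdegA, rfl⟩⟩
    rw [fAct_algebraMap, (hsemiA g).1]
  have hmemB : aM (f₂ * h) ∈ {q : Fk | IsInv (fun g => ρ g) q ∧ PDegLE q d} := by
    refine ⟨fun g => ?_, ⟨f₂ * h, hdegB, rfl⟩⟩
    rw [fAct_algebraMap, (hsemiA g).2]
  have hfe2 : f = aM (f₁ * h) / aM (f₂ * h) := by
    rw [hfe, map_mul, map_mul, mul_div_mul_right _ _ (hmapne h hh0)]
  rw [hfe2]
  exact div_mem (IntermediateField.subset_adjoin k _ hmemA)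
    (IntermediateField.subset_adjoin k _ hmemB)

lemma pdeg_to_rdeg {f : Fk} {d : ℕ} (hp : PDegLE f d) : RDegLE f d := by
  obtain ⟨p, hpd, hfe⟩ := hp
  refine ⟨p, 1, one_ne_zero, fun q _ hq1 => isUnit_of_dvd_one hq1, ?_, ?_⟩
  · rw [map_one, div_one]; exact hfe
  · rw [totalDegree_one, add_zero]; exact hpd

end Aux

/-- If the only roots of unity of `k` are `1` and `-1`, then
`β^r(G,V) = β(G,V)`. -/
theorem stmt1 {k : Type} [Field k] {N : ℕ} {G : Type} [Group G] [Finite G]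
    (hroots : ∀ ζ : k, (∃ n : ℕ, 0 < n ∧ ζ ^ n = 1) → ζ = 1 ∨ ζ = -1)
    (ρ : G →* GL (Fin N) k) :
    betaR (fun g => ρ g) = betaP (fun g => ρ g) := by
  have hset : {d : ℕ | ∀ f, IsInv (fun g => ρ g) f →
      f ∈ IntermediateField.adjoin k {h | IsInv (fun g => ρ g) h ∧ RDegLE h d}}
      = {d : ℕ | ∀ f, IsInv (fun g => ρ g) f →
      f ∈ IntermediateField.adjoin k {h | IsInv (fun g => ρ g) h ∧ PDegLE h d}} := by
    ext d
    simp only [Set.mem_setOf_eq]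
    constructor
    · intro hR f hf
      have h1 := hR f hf
      have h2 : IntermediateField.adjoin k {h | IsInv (fun g => ρ g) h ∧ RDegLE h d}
          ≤ IntermediateField.adjoin k {h | IsInv (fun g => ρ g) h ∧ PDegLE h d} := by
        rw [IntermediateField.adjoin_le_iff]
        intro x hx
        exact rdeg_mem hroots ρ hx.1 hx.2
      exact h2 h1
    · intro hP f hf
      have h2 : IntermediateField.adjoin k {h | IsInv (fun g => ρ g) h ∧ PDegLE h d}
          ≤ IntermediateField.adjoin k {h | IsInv (fun g => ρ g) h ∧ RDegLE h d} :=
        IntermediateField.adjoin.mono _ _ _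
          (fun x (hx : IsInv (fun g => ρ g) x ∧ PDegLE x d) => ⟨hx.1, pdeg_to_rdeg hx.2⟩)
      exact h2 (hP f hf)
  rw [betaR, betaP, hset]
end
end

section
/- Let p be an odd prime, G = ℤ/pℤ, and let s₁,…,s_m be integers, pairwise incongruent mod p and all nonzero mod p, with 1 ≤ m ≤ p−1. Let L := {a ∈ ℤ^m : s₁a₁ + ⋯ + s_m a_m ≡ 0 (mod p)}. Then L contains no point of L¹-norm 1, and any linearly independent subset of L consisting of points of L¹-norm at most 2 has cardinality at most ⌊m/2⌋. -/
/-!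
A lattice point `a` of `L¹`-norm at most `2` has at most two nonzero coordinates. A single one,
`c` with `0 < |c| ≤ 2`, is impossible since the odd prime `p` divides neither `s_x` nor `c`; two of
opposite signs would give `s_x ≡ s_y`. Hence `a = ±(e_x + e_y)` with `s_x + s_y ≡ 0 (mod p)`, an
edge of the graph joining mutually inverse characters. Since the `s_i` are distinct mod `p`, every
vertex of this graph has degree at most `1`, so it has at most `m / 2` edges, and a linearly
independent set contains at most one of `±(e_x + e_y)` for each edge.
-/

open Finset

theorem SimpleGraph.two_mul_card_edgeFinset_le_card {V : Type*} [Fintype V] [DecidableEq V]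
    (G : SimpleGraph V) [DecidableRel G.Adj] (h : ∀ v, G.degree v ≤ 1) :
    2 * #G.edgeFinset ≤ Fintype.card V := by
  rw [← G.sum_degrees_eq_twice_card_edges, Fintype.card_eq_sum_ones]
  exact sum_le_sum fun v _ => h v

theorem LinearIndepOn.add_ne_zero {M : Type*} [AddCommGroup M] {s : Set M}
    (hs : LinearIndepOn ℤ id s) {a b : M} (ha : a ∈ s) (hb : b ∈ s) : a + b ≠ 0 := by
  classical
  intro hab
  have hl := linearIndepOn_iff.mp hs (Finsupp.single a 1 + Finsupp.single b 1)
    (Submodule.add_mem _ (Finsupp.single_mem_supported ℤ 1 ha)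
      (Finsupp.single_mem_supported ℤ 1 hb)) (by simpa using hab)
  have := DFunLike.congr_fun hl a
  simp [Finsupp.single_apply] at this
  split_ifs at this <;> omega

theorem not_dvd_mul_of_natAbs_le_two {p : ℕ} (hp : p.Prime) (hodd : Odd p) {u c : ℤ}
    (hu : ¬ (p : ℤ) ∣ u) (hc0 : c ≠ 0) (hc : c.natAbs ≤ 2) : ¬ (p : ℤ) ∣ u * c := by
  intro h
  rcases (Nat.prime_iff_prime_int.mp hp).dvd_or_dvd h with h | h
  · exact hu h
  · have := Nat.le_of_dvd (Int.natAbs_pos.mpr hc0) (Int.natCast_dvd.mp h)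
    have := hp.two_le
    obtain ⟨k, rfl⟩ := hodd
    omega

section

variable {ι : Type*} [Fintype ι] [DecidableEq ι]

theorem natAbs_eq_one_of_sum_natAbs_le_two {a : ι → ℤ} (hnorm : ∑ i, (a i).natAbs ≤ 2)
    {x y : ι} (hxy : x ≠ y) (hx : a x ≠ 0) (hy : a y ≠ 0) :
    (a x).natAbs = 1 ∧ (a y).natAbs = 1 ∧ ∀ k, k ≠ x ∧ k ≠ y → a k = 0 := by
  have hsub {u : Finset ι} : ∑ i ∈ u, (a i).natAbs ≤ 2 :=
    (sum_le_sum_of_subset (subset_univ u)).trans hnorm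
  have hpair := @hsub {x, y}
  rw [sum_pair hxy] at hpair
  refine ⟨by omega, by omega, fun k ⟨hkx, hky⟩ => ?_⟩
  have htriple := @hsub {k, x, y}
  rw [sum_insert (by simp [hkx, hky]), sum_pair hxy] at htriple
  omega

variable (p : ℕ) (s : ι → ℤ)

def inversePairGraph : SimpleGraph ι where
  Adj x y := x ≠ y ∧ (p : ℤ) ∣ s x + s y
  symm := ⟨fun _ _ h => ⟨h.1.symm, add_comm (s _) _ ▸ h.2⟩⟩
  loopless := ⟨fun _ h => h.1 rfl⟩

instance : DecidableRel (inversePairGraph p s).Adj :=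
  fun x y => inferInstanceAs (Decidable (x ≠ y ∧ (p : ℤ) ∣ s x + s y))

theorem inversePairGraph_degree_le_one (hsdist : ∀ i j, i ≠ j → ¬ (p : ℤ) ∣ (s i - s j))
    (x : ι) : (inversePairGraph p s).degree x ≤ 1 := by
  rw [← SimpleGraph.card_neighborFinset_eq_degree, card_le_one]
  intro y hy z hz
  rw [SimpleGraph.mem_neighborFinset] at hy hz
  by_contra hyz
  exact hsdist y z hyz (by simpa using dvd_sub hy.2 hz.2)

def edgeVector (e : Sym2 ι) : ι → ℤ := fun i => if i ∈ e then 1 else 0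

variable {p s}

theorem exists_ne_apply_ne_zero (hp : p.Prime) (hodd : Odd p) (hs0 : ∀ i, ¬ (p : ℤ) ∣ s i)
    {a : ι → ℤ} (ha : (p : ℤ) ∣ ∑ i, s i * a i) (hnorm : ∑ i, (a i).natAbs ≤ 2)
    {x : ι} (hx : a x ≠ 0) : ∃ y ≠ x, a y ≠ 0 := by
  by_contra! h
  rw [Fintype.sum_eq_single x fun i hi => by rw [h i hi, mul_zero]] at ha
  have hax : (a x).natAbs ≤ 2 :=
    (single_le_sum (fun i _ => Nat.zero_le _) (mem_univ x)).trans hnorm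
  exact not_dvd_mul_of_natAbs_le_two hp hodd (hs0 x) hx hax ha

theorem sum_natAbs_ne_one (hp : p.Prime) (hodd : Odd p) (hs0 : ∀ i, ¬ (p : ℤ) ∣ s i)
    {a : ι → ℤ} (ha : (p : ℤ) ∣ ∑ i, s i * a i) : ∑ i, (a i).natAbs ≠ 1 := by
  intro hnorm
  obtain ⟨x, hx⟩ : ∃ x, a x ≠ 0 := by
    by_contra! h
    simp [h] at hnorm
  obtain ⟨y, hyx, hy⟩ := exists_ne_apply_ne_zero hp hodd hs0 ha (by omega) hx
  have hpair := sum_le_sum_of_subset (f := fun i => (a i).natAbs) (subset_univ {x, y})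
  rw [sum_pair hyx.symm] at hpair
  omega

theorem exists_edge_of_sum_natAbs_le_two (hp : p.Prime) (hodd : Odd p)
    (hs0 : ∀ i, ¬ (p : ℤ) ∣ s i) (hsdist : ∀ i j, i ≠ j → ¬ (p : ℤ) ∣ (s i - s j))
    {a : ι → ℤ} (ha : (p : ℤ) ∣ ∑ i, s i * a i) (hnorm : ∑ i, (a i).natAbs ≤ 2)
    (ha0 : a ≠ 0) :
    ∃ e ∈ (inversePairGraph p s).edgeSet, a = edgeVector e ∨ a = -edgeVector e := by
  obtain ⟨x, hx⟩ := Function.ne_iff.mp ha0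
  obtain ⟨y, hyx, hy⟩ := exists_ne_apply_ne_zero hp hodd hs0 ha hnorm hx
  obtain ⟨hx1, hy1, hrest⟩ := natAbs_eq_one_of_sum_natAbs_le_two hnorm hyx.symm hx hy
  rw [Fintype.sum_eq_add x y hyx.symm fun k hk => by rw [hrest k hk, mul_zero]] at ha
  have hunit : IsUnit (a x) := Int.isUnit_iff_natAbs_eq.mpr hx1
  have hyx_eq : a y = a x := by
    by_contra hne
    refine hsdist x y hyx.symm ((hunit.dvd_mul_right).mp ?_)
    rwa [show a y = -a x by omega, show s x * a x + s y * -a x = (s x - s y) * a x by ring] at ha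
  have hadj : (inversePairGraph p s).Adj x y := by
    refine ⟨hyx.symm, (hunit.dvd_mul_right).mp ?_⟩
    rwa [hyx_eq, ← add_mul] at ha
  refine ⟨s(x, y), hadj, ?_⟩
  have hval : ∀ i, a i = if i ∈ s(x, y) then a x else 0 := by
    intro i
    by_cases hix : i = x
    · simp [hix]
    by_cases hiy : i = y
    · simp [hiy, hyx_eq]
    · simp [hix, hiy, hrest i ⟨hix, hiy⟩]
  rcases (by omega : a x = 1 ∨ a x = -1) with h | h
  · exact Or.inl (funext fun i => by rw [hval i, h]; rfl)
  · refine Or.inr (funext fun i => ?_)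
    rw [hval i, h]
    simp only [edgeVector, Pi.neg_apply]
    split_ifs <;> rfl

theorem card_le_card_edgeFinset_inversePairGraph (hp : p.Prime) (hodd : Odd p)
    (hs0 : ∀ i, ¬ (p : ℤ) ∣ s i) (hsdist : ∀ i j, i ≠ j → ¬ (p : ℤ) ∣ (s i - s j))
    {t : Finset (ι → ℤ)} (ht : ∀ a ∈ t, (p : ℤ) ∣ ∑ i, s i * a i ∧ ∑ i, (a i).natAbs ≤ 2)
    (hli : LinearIndepOn ℤ id (t : Set (ι → ℤ))) :
    #t ≤ #(inversePairGraph p s).edgeFinset := by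
  refine card_le_card_of_forall_subsingleton (fun a e => a = edgeVector e ∨ a = -edgeVector e)
    (fun a ha => ?_) (fun e _ a ⟨ha, hae⟩ b ⟨hb, hbe⟩ => ?_)
  · have ha0 : a ≠ 0 := fun h => hli.add_ne_zero ha ha (by simp [h])
    obtain ⟨e, he, hae⟩ :=
      exists_edge_of_sum_natAbs_le_two hp hodd hs0 hsdist (ht a ha).1 (ht a ha).2 ha0
    exact ⟨e, SimpleGraph.mem_edgeFinset.mpr he, hae⟩
  · by_contra hab
    apply hli.add_ne_zero ha hb
    rcases hae with rfl | rfl <;> rcases hbe with rfl | rfl <;> simp_all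

end

theorem stmt18_general (p : ℕ) (hp : p.Prime) (hodd : Odd p) (m : ℕ)
    (s : Fin m → ℤ)
    (hs0 : ∀ i, ¬ (p : ℤ) ∣ s i)
    (hsdist : ∀ i j, i ≠ j → ¬ (p : ℤ) ∣ (s i - s j)) :
    (∀ a : Fin m → ℤ, (p : ℤ) ∣ ∑ i, s i * a i → ∑ i, (a i).natAbs ≠ 1) ∧
    (∀ t : Finset (Fin m → ℤ),
      (∀ a ∈ t, (p : ℤ) ∣ ∑ i, s i * a i ∧ ∑ i, (a i).natAbs ≤ 2) →
      LinearIndependent ℤ (Subtype.val : {a : Fin m → ℤ // a ∈ t} → (Fin m → ℤ)) →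
      t.card ≤ m / 2) := by
  refine ⟨fun a ha => sum_natAbs_ne_one hp hodd hs0 ha, fun t ht hli => ?_⟩
  have hedges := card_le_card_edgeFinset_inversePairGraph hp hodd hs0 hsdist ht hli
  have hmatching := (inversePairGraph p s).two_mul_card_edgeFinset_le_card
    (inversePairGraph_degree_le_one p s hsdist)
  rw [Fintype.card_fin] at hmatching
  rw [Nat.le_div_iff_mul_le two_pos]
  omega

/-- Let `p` be an odd prime and `s₁,…,s_m` integers that are nonzero and
pairwise incongruent mod `p`, with `1 ≤ m ≤ p − 1`. Then the lattice
`L = {a ∈ ℤᵐ : ∑ sᵢaᵢ ≡ 0 (mod p)}` contains no point of `L¹`-norm `1`, and any linearly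
independent subset of `L` consisting of points of `L¹`-norm at most `2` has cardinality at
most `⌊m/2⌋`. -/
theorem stmt18 (p : ℕ) (hp : p.Prime) (hodd : Odd p) (m : ℕ) (hm1 : 1 ≤ m)
    (hmp : m ≤ p - 1) (s : Fin m → ℤ)
    (hs0 : ∀ i, ¬ (p : ℤ) ∣ s i)
    (hsdist : ∀ i j, i ≠ j → ¬ (p : ℤ) ∣ (s i - s j)) :
    (∀ a : Fin m → ℤ, (p : ℤ) ∣ ∑ i, s i * a i → ∑ i, (a i).natAbs ≠ 1) ∧
    (∀ t : Finset (Fin m → ℤ),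
      (∀ a ∈ t, (p : ℤ) ∣ ∑ i, s i * a i ∧ ∑ i, (a i).natAbs ≤ 2) →
      LinearIndependent ℤ (Subtype.val : {a : Fin m → ℤ // a ∈ t} → (Fin m → ℤ)) →
      t.card ≤ m / 2) :=
  stmt18_general p hp hodd m s hs0 hsdist
end
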